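/- Let n ≥ 1 and let f : ℂ → S^{2n}_1 be a harmonic map of isotropy order at least n − 1. Then ∂_z̄⟨∂_z^n f, ∂_z^n f⟩ vanishes identically; that is, the function z ↦ ⟨∂_z^n f, ∂_z^n f⟩ is holomorphic on ℂ. -/

import Mathlib

open Complex Matrix

noncomputable section

/-- Wirtinger derivative `∂_z`, applied componentwise. -/
def wdz {E : Type*} [NormedAddCommGroup E] [NormedSpace ℂ E] (g : ℂ → E) (z : ℂ) : E :=
  ((1 : ℂ)/2) • (fderiv ℝ g z 1) - (Complex.I/2) • (fderiv ℝ g z Complex.I)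

/-- Wirtinger derivative `∂_z̄`, applied componentwise. -/
def wdzbar {E : Type*} [NormedAddCommGroup E] [NormedSpace ℂ E] (g : ℂ → E) (z : ℂ) : E :=
  ((1 : ℂ)/2) • (fderiv ℝ g z 1) + (Complex.I/2) • (fderiv ℝ g z Complex.I)

/-- Complex-bilinear extension of the Minkowski form, on `ℂ^{m+1}`, signature `(m,1)`. -/
def minkC (m : ℕ) (x y : Fin (m+1) → ℂ) : ℂ :=
  ∑ i : Fin (m+1), (if (i : ℕ) = m then -(x i * y i) else x i * y i)

/-- Minkowski bilinear form on `ℝ^{m+1}`, signature `(m,1)`. -/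
def minkR (m : ℕ) (x y : Fin (m+1) → ℝ) : ℝ :=
  ∑ i : Fin (m+1), (if (i : ℕ) = m then -(x i * y i) else x i * y i)

/-- Componentwise complexification of a real-vector-valued map. -/
def cplx {N : ℕ} (f : ℂ → Fin N → ℝ) : ℂ → Fin N → ℂ :=
  fun z i => (f z i : ℂ)

/-- Componentwise complex conjugation. -/
def conjV {N : ℕ} (v : Fin N → ℂ) : Fin N → ℂ :=
  fun i => (starRingEnd ℂ) (v i)

/-- `1`-based standard basis vector `e_k` of `ℝ^N`. -/
def eR (N k : ℕ) : Fin N → ℝ := fun i => if (i : ℕ) + 1 = k then 1 else 0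

/-- `1`-based standard basis vector `e_k` of `ℂ^N`. -/
def eC (N k : ℕ) : Fin N → ℂ := fun i => if (i : ℕ) + 1 = k then 1 else 0

/-- A smooth harmonic map of `ℂ` into de Sitter space `S^{2n}_1`. -/
def IsHarmonicS (n : ℕ) (f : ℂ → Fin (2*n+1) → ℝ) : Prop :=
  ContDiff ℝ (⊤ : ℕ∞) f ∧ (∀ z, minkR (2*n) (f z) (f z) = 1) ∧
    ∀ z, ∃ r : ℝ, wdz (wdzbar (cplx f)) z = (r : ℂ) • cplx f z

/-- `f` has isotropy order at least `r`. -/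
def HasIsotropyOrderAtLeast (n r : ℕ) (f : ℂ → Fin (2*n+1) → ℝ) : Prop :=
  ∀ a b : ℕ, 1 ≤ a + b → a + b ≤ 2*r + 1 →
    ∀ z, minkC (2*n) (wdz^[a] (cplx f) z) (wdz^[b] (cplx f) z) = 0

/-- `f` is superconformal: isotropy order at least `n-1`, and
`⟨∂_z^n f, ∂_z^n f⟩` does not vanish identically. -/
def IsSuperconformal (n : ℕ) (f : ℂ → Fin (2*n+1) → ℝ) : Prop :=
  HasIsotropyOrderAtLeast n (n-1) f ∧
    ∃ z, minkC (2*n) (wdz^[n] (cplx f) z) (wdz^[n] (cplx f) z) ≠ 0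

/-- `fs 0, fs 1, …, fs n` is a globally defined harmonic sequence for `f`. -/
def IsHarmonicSeq (n : ℕ) (f : ℂ → Fin (2*n+1) → ℝ)
    (fs : ℕ → ℂ → Fin (2*n+1) → ℂ) : Prop :=
  fs 0 = cplx f ∧ (∀ j, j ≤ n → ContDiff ℝ (⊤ : ℕ∞) (fs j)) ∧
    ∀ j, j < n →
      DiscreteTopology {z : ℂ // minkC (2*n) (fs j z) (conjV (fs j z)) = 0} ∧
      ∀ z, minkC (2*n) (fs j z) (conjV (fs j z)) ≠ 0 →
        fs (j+1) z = wdz (fs j) z -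
          (minkC (2*n) (wdz (fs j) z) (conjV (fs j z)) /
            minkC (2*n) (fs j z) (conjV (fs j z))) • fs j z

/-- The matrix `υ = diag(1,…,1,-1)` of the Minkowski form. -/
def upsR (n : ℕ) : Matrix (Fin (2*n+1)) (Fin (2*n+1)) ℝ :=
  Matrix.diagonal (fun i => if (i : ℕ) = 2*n then -1 else 1)

/-- Membership in `SO(2n,1)`. -/
def memSO (n : ℕ) (g : Matrix (Fin (2*n+1)) (Fin (2*n+1)) ℝ) : Prop :=
  gᵀ * upsR n * g = upsR n ∧ g.det = 1

/-- The prescribed entries (in `1`-based indices `j k`) of the Maurer–Cartan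
matrix `M = F⁻¹ ∂_z F` of a primitive frame. -/
def Ment (n : ℕ) (a c : ℕ → ℂ) (j k : ℕ) : ℂ :=
  if j = 1 ∧ k = 2 then -c 1
  else if j = 1 ∧ k = 3 then -(Complex.I * c 1)
  else if j = 2 ∧ k = 1 then c 1
  else if j = 3 ∧ k = 1 then Complex.I * c 1
  else if Even j ∧ k = j + 1 ∧ 2 ≤ j ∧ j ≤ 2*n then
    (if j = 2*n then a n else a (j/2))
  else if Even k ∧ j = k + 1 ∧ 2 ≤ k ∧ k ≤ 2*n then
    (if k = 2*n then a n else -a (k/2))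
  else if j = 2*n - 2 ∧ k = 2*n then -c n - c 0
  else if j = 2*n - 2 ∧ k = 2*n + 1 then -c n + c 0
  else if j = 2*n - 1 ∧ k = 2*n then Complex.I * c n + Complex.I * c 0
  else if j = 2*n - 1 ∧ k = 2*n + 1 then Complex.I * c n - Complex.I * c 0
  else if j = 2*n ∧ k = 2*n - 2 then c n + c 0
  else if j = 2*n ∧ k = 2*n - 1 then -(Complex.I * c n) - Complex.I * c 0
  else if j = 2*n + 1 ∧ k = 2*n - 2 then -c n + c 0
  else if j = 2*n + 1 ∧ k = 2*n - 1 then Complex.I * c n - Complex.I * c 0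
  else if Even j ∧ k = j + 2 ∧ 2 ≤ j ∧ j + 4 ≤ 2*n then -c (j/2 + 1)
  else if Even j ∧ k = j + 3 ∧ 2 ≤ j ∧ j + 4 ≤ 2*n then -(Complex.I * c (j/2 + 1))
  else if Odd j ∧ k = j + 1 ∧ 3 ≤ j ∧ j + 3 ≤ 2*n then Complex.I * c (j/2 + 1)
  else if Odd j ∧ k = j + 2 ∧ 3 ≤ j ∧ j + 3 ≤ 2*n then -c (j/2 + 1)
  else if Even k ∧ j = k + 2 ∧ 2 ≤ k ∧ k + 4 ≤ 2*n then c (k/2 + 1)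
  else if Odd k ∧ j = k + 1 ∧ 3 ≤ k ∧ k + 3 ≤ 2*n then -(Complex.I * c (k/2 + 1))
  else if Even k ∧ j = k + 3 ∧ 2 ≤ k ∧ k + 4 ≤ 2*n then Complex.I * c (k/2 + 1)
  else if Odd k ∧ j = k + 2 ∧ 3 ≤ k ∧ k + 3 ≤ 2*n then c (k/2 + 1)
  else 0

/-- The Maurer–Cartan form `F⁻¹ ∂_z F` (computed entrywise after complexifying `F`). -/
def MC (n : ℕ) (F : ℂ → Matrix (Fin (2*n+1)) (Fin (2*n+1)) ℝ) (z : ℂ) :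
    Matrix (Fin (2*n+1)) (Fin (2*n+1)) ℂ :=
  ((F z).map (fun t => (t : ℂ)))⁻¹ *
    Matrix.of (fun p q => wdz (fun w => ((F w p q : ℝ) : ℂ)) z)

/-- `F` is a primitive frame with coefficient functions `a 1, …, a n` and
`c 0, c 1, …, c n`. -/
def IsPrimitiveFrame (n : ℕ) (F : ℂ → Matrix (Fin (2*n+1)) (Fin (2*n+1)) ℝ)
    (a c : ℕ → ℂ → ℂ) : Prop :=
  (∀ p q, ContDiff ℝ (⊤ : ℕ∞) (fun z => F z p q)) ∧
  (∀ z, memSO n (F z)) ∧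
  (∀ j, 1 ≤ j → j ≤ n → ContDiff ℝ (⊤ : ℕ∞) (a j)) ∧
  (∀ j, j ≤ n → ContDiff ℝ (⊤ : ℕ∞) (c j)) ∧
  ∀ z, MC n F z =
    Matrix.of (fun p q : Fin (2*n+1) =>
      Ment n (fun k => a k z) (fun k => c k z) ((p : ℕ) + 1) ((q : ℕ) + 1))

/-- The primitive frame is cyclic: at some point all of `c 0, …, c n` are nonzero. -/
def IsCyclicCoeffs (n : ℕ) (c : ℕ → ℂ → ℂ) : Prop :=
  ∃ z, ∀ j, j ≤ n → c j z ≠ 0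

/-- Double periodicity with respect to the lattice generated by `ω₁, ω₂`. -/
def DoublyPeriodic {α : Type*} (ω₁ ω₂ : ℂ) (f : ℂ → α) : Prop :=
  LinearIndependent ℝ ![ω₁, ω₂] ∧ ∀ z, f (z + ω₁) = f z ∧ f (z + ω₂) = f z



section Helpers

variable {E : Type*} [NormedAddCommGroup E] [NormedSpace ℂ E]

lemma cd_fderiv_apply {g : ℂ → E} (hg : ContDiff ℝ (⊤:ℕ∞) g) (v : ℂ) :
    ContDiff ℝ (⊤:ℕ∞) (fun z => fderiv ℝ g z v) :=
  (hg.fderiv_right (m := (⊤:ℕ∞)) (by simp)).clm_apply contDiff_const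

lemma wdz_contDiff {g : ℂ → E} (hg : ContDiff ℝ (⊤:ℕ∞) g) : ContDiff ℝ (⊤:ℕ∞) (wdz g) := by
  unfold wdz
  exact (((cd_fderiv_apply hg 1).const_smul ((1:ℂ)/2))).sub
    ((cd_fderiv_apply hg Complex.I).const_smul (Complex.I/2))

lemma wdzbar_contDiff {g : ℂ → E} (hg : ContDiff ℝ (⊤:ℕ∞) g) :
    ContDiff ℝ (⊤:ℕ∞) (wdzbar g) := by
  unfold wdzbar
  exact (((cd_fderiv_apply hg 1).const_smul ((1:ℂ)/2))).add
    ((cd_fderiv_apply hg Complex.I).const_smul (Complex.I/2))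

lemma hasFDerivAt_fderiv_apply {g : ℂ → E} (hg : ContDiff ℝ (⊤:ℕ∞) g) (z v : ℂ) :
    HasFDerivAt (fun y => fderiv ℝ g y v)
      ((ContinuousLinearMap.apply ℝ E v).comp (fderiv ℝ (fderiv ℝ g) z)) z := by
  have h1 : DifferentiableAt ℝ (fderiv ℝ g) z :=
    ((hg.fderiv_right (m := (⊤:ℕ∞)) (by simp)).differentiable (by simp)).differentiableAt
  exact (ContinuousLinearMap.apply ℝ E v).hasFDerivAt.comp z h1.hasFDerivAt

lemma hasFDerivAt_wdz {g : ℂ → E} (hg : ContDiff ℝ (⊤:ℕ∞) g) (z : ℂ) :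
    HasFDerivAt (wdz g)
      (((1:ℂ)/2) • ((ContinuousLinearMap.apply ℝ E 1).comp (fderiv ℝ (fderiv ℝ g) z))
        - (Complex.I/2) • ((ContinuousLinearMap.apply ℝ E Complex.I).comp
            (fderiv ℝ (fderiv ℝ g) z))) z := by
  unfold wdz
  exact ((hasFDerivAt_fderiv_apply hg z 1).const_smul ((1:ℂ)/2)).sub
    ((hasFDerivAt_fderiv_apply hg z Complex.I).const_smul (Complex.I/2))

lemma hasFDerivAt_wdzbar {g : ℂ → E} (hg : ContDiff ℝ (⊤:ℕ∞) g) (z : ℂ) :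
    HasFDerivAt (wdzbar g)
      (((1:ℂ)/2) • ((ContinuousLinearMap.apply ℝ E 1).comp (fderiv ℝ (fderiv ℝ g) z))
        + (Complex.I/2) • ((ContinuousLinearMap.apply ℝ E Complex.I).comp
            (fderiv ℝ (fderiv ℝ g) z))) z := by
  unfold wdzbar
  exact ((hasFDerivAt_fderiv_apply hg z 1).const_smul ((1:ℂ)/2)).add
    ((hasFDerivAt_fderiv_apply hg z Complex.I).const_smul (Complex.I/2))

lemma wdz_wdzbar_comm {g : ℂ → E} (hg : ContDiff ℝ (⊤:ℕ∞) g) (z : ℂ) :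
    wdz (wdzbar g) z = wdzbar (wdz g) z := by
  have hsymm : fderiv ℝ (fderiv ℝ g) z 1 Complex.I = fderiv ℝ (fderiv ℝ g) z Complex.I 1 := by
    apply second_derivative_symmetric (f := g)
      (fun y => ((hg.differentiable (by simp)) y).hasFDerivAt)
    exact (((hg.fderiv_right (m := (⊤:ℕ∞)) (by simp)).differentiable (by simp))
      z).hasFDerivAt
  simp only [wdz, wdzbar, (hasFDerivAt_wdz hg z).fderiv, (hasFDerivAt_wdzbar hg z).fderiv,
    ContinuousLinearMap.sub_apply, ContinuousLinearMap.add_apply,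
    ContinuousLinearMap.coe_smul', Pi.smul_apply, ContinuousLinearMap.coe_comp',
    Function.comp_apply, ContinuousLinearMap.apply_apply]
  rw [← hsymm]
  module

lemma wdz_smul {ρ : ℂ → ℂ} {u : ℂ → E} {z : ℂ}
    (hρ : DifferentiableAt ℝ ρ z) (hu : DifferentiableAt ℝ u z) :
    wdz (fun w => ρ w • u w) z = wdz ρ z • u z + ρ z • wdz u z := by
  have h := (hρ.hasFDerivAt.fun_smul hu.hasFDerivAt).fderiv
  simp only [wdz, h, ContinuousLinearMap.add_apply, ContinuousLinearMap.coe_smul',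
    Pi.smul_apply, ContinuousLinearMap.smulRight_apply, smul_eq_mul]
  module

lemma wdzbar_smul {ρ : ℂ → ℂ} {u : ℂ → E} {z : ℂ}
    (hρ : DifferentiableAt ℝ ρ z) (hu : DifferentiableAt ℝ u z) :
    wdzbar (fun w => ρ w • u w) z = wdzbar ρ z • u z + ρ z • wdzbar u z := by
  have h := (hρ.hasFDerivAt.fun_smul hu.hasFDerivAt).fderiv
  simp only [wdzbar, h, ContinuousLinearMap.add_apply, ContinuousLinearMap.coe_smul',
    Pi.smul_apply, ContinuousLinearMap.smulRight_apply, smul_eq_mul]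
  module

lemma wdzbar_mul {u v : ℂ → ℂ} {z : ℂ}
    (hu : DifferentiableAt ℝ u z) (hv : DifferentiableAt ℝ v z) :
    wdzbar (fun w => u w * v w) z = wdzbar u z * v z + u z * wdzbar v z := by
  simpa [smul_eq_mul, mul_comm] using wdzbar_smul (E := ℂ) hu hv

lemma wdz_sum {ι : Type*} {s : Finset ι} {t : ι → ℂ → E} {z : ℂ}
    (h : ∀ i ∈ s, DifferentiableAt ℝ (t i) z) :
    wdz (fun w => ∑ i ∈ s, t i w) z = ∑ i ∈ s, wdz (t i) z := by
  simp only [wdz, fderiv_fun_sum h, ContinuousLinearMap.sum_apply, Finset.smul_sum]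
  rw [← Finset.sum_sub_distrib]

lemma wdzbar_sum {ι : Type*} {s : Finset ι} {t : ι → ℂ → E} {z : ℂ}
    (h : ∀ i ∈ s, DifferentiableAt ℝ (t i) z) :
    wdzbar (fun w => ∑ i ∈ s, t i w) z = ∑ i ∈ s, wdzbar (t i) z := by
  simp only [wdzbar, fderiv_fun_sum h, ContinuousLinearMap.sum_apply, Finset.smul_sum]
  rw [← Finset.sum_add_distrib]

lemma wdz_zero_fn (z : ℂ) : wdz (fun _ : ℂ => (0 : E)) z = 0 := by
  simp [wdz, fderiv_const]

lemma wdzbar_const_fn (c : ℂ) (z : ℂ) : wdzbar (fun _ : ℂ => c) z = 0 := by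
  simp [wdzbar, fderiv_const]

lemma wdzbar_apply {N : ℕ} {h : ℂ → Fin N → ℂ} {z : ℂ} (hd : DifferentiableAt ℝ h z)
    (i : Fin N) : wdzbar h z i = wdzbar (fun w => h w i) z := by
  have : fderiv ℝ (fun w => h w i) z =
      (ContinuousLinearMap.proj (R := ℝ) (φ := fun _ : Fin N => ℂ) i).comp (fderiv ℝ h z) :=
    ((ContinuousLinearMap.proj (R := ℝ) (φ := fun _ : Fin N => ℂ) i).hasFDerivAt.comp z
      hd.hasFDerivAt).fderiv
  simp [wdzbar, this]

lemma wdz_iterate_contDiff {g : ℂ → E} (hg : ContDiff ℝ (⊤:ℕ∞) g) (k : ℕ) :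
    ContDiff ℝ (⊤:ℕ∞) (wdz^[k] g) := by
  induction k with
  | zero => simpa using hg
  | succ k ih => rw [Function.iterate_succ_apply']; exact wdz_contDiff ih

lemma wdzbar_wdz_iterate (k : ℕ) {g : ℂ → E} (hg : ContDiff ℝ (⊤:ℕ∞) g) :
    wdzbar (wdz^[k] g) = wdz^[k] (wdzbar g) := by
  induction k generalizing g with
  | zero => rfl
  | succ k ih =>
    rw [Function.iterate_succ_apply, ih (wdz_contDiff hg),
      show wdzbar (wdz g) = wdz (wdzbar g) from funext fun z => (wdz_wdzbar_comm hg z).symm,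
      ← Function.iterate_succ_apply]

lemma minkC_eq (m : ℕ) (x y : Fin (m+1) → ℂ) :
    minkC m x y = ∑ i : Fin (m+1), (if (i : ℕ) = m then (-1:ℂ) else 1) * (x i * y i) := by
  unfold minkC
  refine Finset.sum_congr rfl fun i _ => ?_
  split <;> ring

lemma minkC_comm (m : ℕ) (x y : Fin (m+1) → ℂ) : minkC m x y = minkC m y x := by
  unfold minkC
  refine Finset.sum_congr rfl fun i _ => ?_
  split <;> ring

lemma minkC_smul_left (m : ℕ) (a : ℂ) (x y : Fin (m+1) → ℂ) :
    minkC m (a • x) y = a * minkC m x y := by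
  simp only [minkC_eq, Pi.smul_apply, smul_eq_mul, Finset.mul_sum]
  refine Finset.sum_congr rfl fun i _ => ?_
  ring

lemma minkC_add_left (m : ℕ) (x x' y : Fin (m+1) → ℂ) :
    minkC m (x + x') y = minkC m x y + minkC m x' y := by
  simp only [minkC_eq, Pi.add_apply]
  rw [← Finset.sum_add_distrib]
  refine Finset.sum_congr rfl fun i _ => ?_
  ring

lemma minkC_zero_left (m : ℕ) (y : Fin (m+1) → ℂ) : minkC m 0 y = 0 := by
  simp [minkC_eq]

lemma minkC_sum_left {ι : Type*} (m : ℕ) (s : Finset ι) (u : ι → Fin (m+1) → ℂ)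
    (y : Fin (m+1) → ℂ) :
    minkC m (∑ j ∈ s, u j) y = ∑ j ∈ s, minkC m (u j) y := by
  induction s using Finset.cons_induction with
  | empty => simp [minkC_zero_left]
  | cons a s ha ih => rw [Finset.sum_cons, Finset.sum_cons, minkC_add_left, ih]

lemma minkC_real (m : ℕ) (x y : Fin (m+1) → ℝ) :
    minkC m (fun i => (x i : ℂ)) (fun i => (y i : ℂ)) = ((minkR m x y : ℝ) : ℂ) := by
  unfold minkC minkR
  push_cast [apply_ite (Complex.ofReal)]
  rfl

lemma component_diffAt {N : ℕ} {u : ℂ → Fin N → ℂ} {z : ℂ}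
    (hu : DifferentiableAt ℝ u z) (i : Fin N) :
    DifferentiableAt ℝ (fun w => u w i) z :=
  ((ContinuousLinearMap.proj (R := ℝ) (φ := fun _ : Fin N => ℂ) i).hasFDerivAt.comp z
    hu.hasFDerivAt).differentiableAt

lemma wdzbar_minkC {m : ℕ} {u v : ℂ → Fin (m+1) → ℂ} {z : ℂ}
    (hu : ContDiff ℝ (⊤:ℕ∞) u) (hv : ContDiff ℝ (⊤:ℕ∞) v) :
    wdzbar (fun w => minkC m (u w) (v w)) z
      = minkC m (wdzbar u z) (v z) + minkC m (u z) (wdzbar v z) := by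
  have hud : DifferentiableAt ℝ u z := (hu.differentiable (by simp)) z
  have hvd : DifferentiableAt ℝ v z := (hv.differentiable (by simp)) z
  set t : Fin (m+1) → ℂ → ℂ :=
    fun i w => (if (i : ℕ) = m then (-1:ℂ) else 1) * (u w i * v w i) with ht
  have h1 : (fun w => minkC m (u w) (v w)) = fun w => ∑ i : Fin (m+1), t i w :=
    funext fun w => minkC_eq m (u w) (v w)
  have hdt : ∀ i ∈ (Finset.univ : Finset (Fin (m+1))), DifferentiableAt ℝ (t i) z := by
    intro i _
    exact ((component_diffAt hud i).mul (component_diffAt hvd i)).const_mul _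
  rw [h1, wdzbar_sum hdt]
  have h2 : ∀ i ∈ (Finset.univ : Finset (Fin (m+1))),
      wdzbar (t i) z
        = (if (i : ℕ) = m then (-1:ℂ) else 1) *
            (wdzbar (fun w => u w i) z * v z i + u z i * wdzbar (fun w => v w i) z) := by
    intro i _
    have hmul : t i =
        fun w' => (fun _ : ℂ => (if (i : ℕ) = m then (-1:ℂ) else 1)) w' •
          ((fun w => u w i * v w i) w') := by
      funext w'; simp [ht, smul_eq_mul]
    rw [hmul, wdzbar_smul (differentiableAt_const _)
      ((component_diffAt hud i).fun_mul (component_diffAt hvd i)), wdzbar_const_fn]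
    rw [wdzbar_mul (component_diffAt hud i) (component_diffAt hvd i)]
    simp [smul_eq_mul]
  rw [Finset.sum_congr rfl h2]
  rw [minkC_eq, minkC_eq, ← Finset.sum_add_distrib]
  refine Finset.sum_congr rfl fun i _ => ?_
  rw [wdzbar_apply hud i, wdzbar_apply hvd i]
  ring

lemma contDiff_minkC {m : ℕ} {u v : ℂ → Fin (m+1) → ℂ}
    (hu : ContDiff ℝ (⊤:ℕ∞) u) (hv : ContDiff ℝ (⊤:ℕ∞) v) :
    ContDiff ℝ (⊤:ℕ∞) (fun z => minkC m (u z) (v z)) := by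
  have h1 : (fun z => minkC m (u z) (v z)) =
      fun z => ∑ i : Fin (m+1), (if (i : ℕ) = m then (-1:ℂ) else 1) * (u z i * v z i) :=
    funext fun z => minkC_eq m (u z) (v z)
  rw [h1]
  apply ContDiff.sum
  intro i _
  exact contDiff_const.mul
    (((ContinuousLinearMap.proj (R := ℝ) (φ := fun _ : Fin (m+1) => ℂ) i).contDiff.comp hu).mul
      ((ContinuousLinearMap.proj (R := ℝ) (φ := fun _ : Fin (m+1) => ℂ) i).contDiff.comp hv))

lemma wdz_iterate_smul (g : ℂ → E) (hg : ContDiff ℝ (⊤:ℕ∞) g) (ρ : ℂ → ℂ)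
    (hρ : ContDiff ℝ (⊤:ℕ∞) ρ) (k : ℕ) :
    ∃ c : ℕ → ℂ → ℂ, (∀ j, ContDiff ℝ (⊤:ℕ∞) (c j)) ∧ (∀ j, k < j → c j = fun _ => 0) ∧
      ∀ z, wdz^[k] (fun w => ρ w • g w) z
        = ∑ j ∈ Finset.range (k+1), c j z • wdz^[j] g z := by
  induction k with
  | zero =>
    refine ⟨fun j => if j = 0 then ρ else fun _ => 0, ?_, ?_, ?_⟩
    · intro j
      by_cases h : j = 0 <;> simp [h, hρ, contDiff_const]
    · intro j hj
      have : j ≠ 0 := by omega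
      simp [this]
    · intro z; simp
  | succ k ih =>
    obtain ⟨c, hc, hc0, hcz⟩ := ih
    refine ⟨fun j => fun z => wdz (c j) z + (if j = 0 then 0 else c (j-1) z), ?_, ?_, ?_⟩
    · intro j
      refine (wdz_contDiff (hc j)).add ?_
      by_cases hj : j = 0
      · simpa [hj] using (contDiff_const (c := (0:ℂ)))
      · simpa [hj] using hc (j-1)
    · intro j hj
      have hj0 : j ≠ 0 := by omega
      funext w
      show wdz (c j) w + (if j = 0 then 0 else c (j-1) w) = 0
      rw [hc0 j (by omega), hc0 (j-1) (by omega)]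
      simp [hj0, wdz_zero_fn]
    · intro z
      show wdz^[k+1] (fun w => ρ w • g w) z
        = ∑ j ∈ Finset.range (k+2),
            (wdz (c j) z + (if j = 0 then 0 else c (j-1) z)) • wdz^[j] g z
      have hRHS : ∑ j ∈ Finset.range (k+2),
          (wdz (c j) z + (if j = 0 then 0 else c (j-1) z)) • wdz^[j] g z
        = ∑ j ∈ Finset.range (k+1), wdz (c j) z • wdz^[j] g z
          + ∑ j ∈ Finset.range (k+1), c j z • wdz^[j+1] g z := by
        simp only [add_smul]
        rw [Finset.sum_add_distrib]
        congr 1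
        · rw [Finset.sum_range_succ, hc0 (k+1) (by omega)]
          simp [wdz_zero_fn]
        · rw [Finset.sum_range_succ'
            (f := fun j => (if j = 0 then 0 else c (j-1) z) • wdz^[j] g z) (n := k+1)]
          simp
      rw [hRHS, Function.iterate_succ_apply', funext hcz]
      rw [wdz_sum (fun j _ =>
        (((hc j).differentiable (by simp)) z).fun_smul
          ((((wdz_iterate_contDiff hg j).differentiable (by simp)) z)))]
      have hterm : ∀ j ∈ Finset.range (k+1),
          wdz (fun w => c j w • wdz^[j] g w) z
            = wdz (c j) z • wdz^[j] g z + c j z • wdz^[j+1] g z := by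
        intro j _
        rw [wdz_smul (((hc j).differentiable (by simp)) z)
          ((((wdz_iterate_contDiff hg j).differentiable (by simp)) z)),
          Function.iterate_succ_apply']
      rw [Finset.sum_congr rfl hterm, Finset.sum_add_distrib]

lemma cplx_contDiff {N : ℕ} {f : ℂ → Fin N → ℝ} (hf : ContDiff ℝ (⊤ : ℕ∞) f) :
    ContDiff ℝ (⊤:ℕ∞) (cplx f) := by
  have hf' : ContDiff ℝ (⊤:ℕ∞) f := hf.of_le (by simp)
  exact contDiff_pi.2 fun i =>
    Complex.ofRealCLM.contDiff.comp ((contDiff_pi.1 hf') i)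

end Helpers

/-- If `f : ℂ → S^{2n}_1` (n ≥ 1) is a harmonic map of isotropy
order at least `n-1`, then `z ↦ ⟨∂_z^n f, ∂_z^n f⟩` is holomorphic on `ℂ`. -/
theorem stmt6 (n : ℕ) (hn : 1 ≤ n) (f : ℂ → Fin (2*n+1) → ℝ)
    (hharm : IsHarmonicS n f) (hiso : HasIsotropyOrderAtLeast n (n-1) f) :
    ∀ z, wdzbar
      (fun w => minkC (2*n) (wdz^[n] (cplx f) w) (wdz^[n] (cplx f) w)) z = 0 := by
  obtain ⟨m, rfl⟩ : ∃ m, n = m + 1 := ⟨n - 1, by omega⟩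
  simp only [Nat.add_sub_cancel] at hiso
  intro z
  obtain ⟨hfsm, hnorm, hlap⟩ := hharm
  set G : ℂ → Fin (2*(m+1)+1) → ℂ := cplx f with hGdef
  have hGsm : ContDiff ℝ (⊤:ℕ∞) G := cplx_contDiff hfsm
  have hUsm : ContDiff ℝ (⊤:ℕ∞) (wdz^[m+1] G) := wdz_iterate_contDiff hGsm (m+1)
  set ρ : ℂ → ℂ := fun w => minkC (2*(m+1)) (wdz (wdzbar G) w) (G w) with hρdef
  have hρsm : ContDiff ℝ (⊤:ℕ∞) ρ :=
    contDiff_minkC (wdz_contDiff (wdzbar_contDiff hGsm)) hGsm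
  have hρeq : ∀ w, wdz (wdzbar G) w = ρ w • G w := by
    intro w
    obtain ⟨r, hr⟩ := hlap w
    have h1 : minkC (2*(m+1)) (G w) (G w) = 1 := by
      have h := hnorm w
      have : minkC (2*(m+1)) (fun i => ((f w i : ℝ) : ℂ)) (fun i => ((f w i : ℝ) : ℂ))
          = ((minkR (2*(m+1)) (f w) (f w) : ℝ) : ℂ) := minkC_real (2*(m+1)) (f w) (f w)
      rw [h] at this
      rw [Complex.ofReal_one] at this; exact this
    have hρw : ρ w = (r : ℂ) := by
      rw [hρdef]
      simp only [hr]
      rw [minkC_smul_left, h1, mul_one]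
    rw [hρw, hr]
  have hcomm : wdzbar (wdz^[m+1] G) = wdz^[m+1] (wdzbar G) := wdzbar_wdz_iterate (m+1) hGsm
  have h2 : wdz^[m+1] (wdzbar G) = wdz^[m] (fun w => ρ w • G w) := by
    rw [Function.iterate_succ_apply]
    congr 1
    exact funext hρeq
  obtain ⟨c, hc, hc0, hcz⟩ := wdz_iterate_smul G hGsm ρ hρsm m
  have h3 : wdzbar (wdz^[m+1] G) z = ∑ j ∈ Finset.range (m+1), c j z • wdz^[j] G z := by
    rw [hcomm, h2, hcz z]
  have hkey : minkC (2*(m+1)) (wdzbar (wdz^[m+1] G) z) (wdz^[m+1] G z) = 0 := by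
    rw [h3, minkC_sum_left]
    apply Finset.sum_eq_zero
    intro j hj
    have hjn : j < m + 1 := Finset.mem_range.1 hj
    rw [minkC_smul_left, hiso j (m+1) (by omega) (by omega) z, mul_zero]
  rw [wdzbar_minkC hUsm hUsm, hkey, minkC_comm, hkey, add_zero]

end
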